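/- Define P_{2n} for n ≤ 0 by P₀ = M⁻², P₋₂ = M²x² + (M⁴ - M² + 1)x + M², and P_{2n} = Q·P_{2(n+1)} - M⁸·P_{2(n+2)} for n ≤ -2, with Q = -M⁴x³ + (-2M⁶+2M⁴-2M²)x² + (-M⁸+2M⁶-3M⁴+2M²-1)x + 2M⁴. Then for every n ≤ -1, the degree of P_{2n} in x equals -(3n + 1). -/

import Mathlib

open Polynomial

/-- `M` as a unit of the Laurent polynomial ring `ℂ[M, M⁻¹]`. -/
noncomputable def mL : LaurentPolynomial ℂ := LaurentPolynomial.T 1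

/-- `Q ∈ (ℂ[M,M⁻¹])[x]`. -/
noncomputable def QnegPoly : Polynomial (LaurentPolynomial ℂ) :=
  Polynomial.C (-(mL ^ 4)) * X ^ 3 + Polynomial.C (-2 * mL ^ 6 + 2 * mL ^ 4 - 2 * mL ^ 2) * X ^ 2 +
    Polynomial.C (-(mL ^ 8) + 2 * mL ^ 6 - 3 * mL ^ 4 + 2 * mL ^ 2 - 1) * X + Polynomial.C (2 * mL ^ 4)

/-- `Pneg k` is `P_{2n}` for `n = -k ≤ 0`: `P₀ = M⁻²`, `P₋₂` explicit, and
`P_{2n} = Q·P_{2(n+1)} - M⁸·P_{2(n+2)}` for `n ≤ -2`. -/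
noncomputable def Pneg : ℕ → Polynomial (LaurentPolynomial ℂ)
  | 0 => Polynomial.C (LaurentPolynomial.T (-2))
  | 1 => Polynomial.C (mL ^ 2) * X ^ 2 + Polynomial.C (mL ^ 4 - mL ^ 2 + 1) * X + Polynomial.C (mL ^ 2)
  | k + 2 => QnegPoly * Pneg (k + 1) - Polynomial.C (mL ^ 8) * Pneg k

/-
The recurrence `P_{2n} = Q·P_{2(n+1)} - M⁸·P_{2(n+2)}` raises the degree by `deg Q = 3` at each
step: as long as the degrees strictly increase, `Q·P_{2(n+1)}` has larger degree than
`M⁸·P_{2(n+2)}`, so the leading terms cannot cancel, and `ℂ[M, M⁻¹]` has no zero divisors.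
Starting from `deg P₀ = 0 < deg P₋₂ = 2` this gives `deg P_{2n} = 3(-n - 1) + 2`.
-/

section Recurrence

variable {R : Type*} [Ring R] [NoZeroDivisors R]

theorem natDegree_mul_sub_mul_eq {q r a b : R[X]} (hq : q ≠ 0) (hr : r.natDegree ≤ q.natDegree)
    (hba : b.natDegree < a.natDegree) :
    (q * a - r * b).natDegree = q.natDegree + a.natDegree := by
  have hqa : (q * a).natDegree = q.natDegree + a.natDegree :=
    natDegree_mul hq (ne_zero_of_natDegree_gt hba)
  have hrb : (r * b).natDegree < (q * a).natDegree :=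
    hqa ▸ (natDegree_mul_le_of_le hr le_rfl).trans_lt (by omega)
  rw [natDegree_sub_eq_left_of_natDegree_lt hrb, hqa]

theorem natDegree_succ_of_recurrence {p : ℕ → R[X]} {q r : R[X]} (hq : 0 < q.natDegree)
    (hr : r.natDegree ≤ q.natDegree) (h01 : (p 0).natDegree < (p 1).natDegree)
    (hrec : ∀ k, p (k + 2) = q * p (k + 1) - r * p k) (k : ℕ) :
    (p (k + 1)).natDegree = q.natDegree * k + (p 1).natDegree := by
  suffices ∀ k, (p (k + 1)).natDegree = q.natDegree * k + (p 1).natDegree ∧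
      (p k).natDegree < (p (k + 1)).natDegree from (this k).1
  intro k
  induction k with
  | zero => exact ⟨by simp, h01⟩
  | succ k ih =>
    have hstep := natDegree_mul_sub_mul_eq (ne_zero_of_natDegree_gt hq) hr ih.2
    rw [hrec, hstep, ih.1]
    exact ⟨by ring, by omega⟩

end Recurrence

theorem mL_ne_zero : mL ≠ 0 := (LaurentPolynomial.isUnit_T 1).ne_zero

theorem QnegPoly_natDegree : QnegPoly.natDegree = 3 := by
  unfold QnegPoly
  compute_degree!
  exact mL_ne_zero

theorem Pneg_zero_natDegree : (Pneg 0).natDegree = 0 := natDegree_C _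

theorem Pneg_one_natDegree : (Pneg 1).natDegree = 2 := by
  unfold Pneg
  compute_degree!
  exact mL_ne_zero

theorem Pneg_succ_natDegree (k : ℕ) : (Pneg (k + 1)).natDegree = 3 * k + 2 := by
  have h := natDegree_succ_of_recurrence (p := Pneg) (by rw [QnegPoly_natDegree]; norm_num)
    (by simp)
    (by rw [Pneg_zero_natDegree, Pneg_one_natDegree]; norm_num) (fun _ => rfl) k
  rwa [QnegPoly_natDegree, Pneg_one_natDegree] at h

/-- For every `n ≤ -1`, the degree of `P_{2n}` in `x` equals `-(3n + 1)`. -/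
theorem Pneg_natDegree (n : ℤ) (hn : n ≤ -1) :
    (Pneg (-n).toNat).natDegree = (-(3 * n + 1)).toNat := by
  obtain ⟨k, hk⟩ : ∃ k : ℕ, (-n).toNat = k + 1 := ⟨(-n).toNat - 1, by omega⟩
  rw [hk, Pneg_succ_natDegree]
  omega
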